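/- arXiv:2405.16891 — 8 statements merged into one kernel-verified Lean document; each statement's English description precedes it below -/
import Mathlib

section
/- For any positive integers n > k there exists a simple graph G on the vertex set Fin n and a family f : Fin n → EuclideanSpace ℂ (Fin k) such that f spans EuclideanSpace ℂ (Fin k) and the Gramian matrix of f equals the Laplacian matrix L(G); that is, for any n > k there exists a G(n,k)-frame for ℂ^k. -/
open scoped ComplexInnerProductSpace Classical

/-!
Orient each edge of `G` and let `B` be the resulting signed incidence matrix (rows indexed by
vertices, columns by edges); then `B Bᵀ = L(G)`, so the rows of `B` have Gramian `L(G)`. For the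
path `0 — 1 — ⋯ — k` inside `Fin n` (the remaining vertices isolated) there are exactly `k`
edges, and the rows of `B` span `ℂ^k`: the row of vertex `0` is `e₀`, the row of vertex
`m + 1 < k` is `e_{m+1} - e_m`.
-/

open Finset
open scoped Matrix

theorem Function.Injective.sum_ite_eq {E α R : Type*} [Fintype E] [DecidableEq α]
    [AddCommMonoidWithOne R] {g : E → α} (hg : Function.Injective g) (a : α) :
    ∑ e, (if a = g e then 1 else 0 : R) = if a ∈ Set.range g then 1 else 0 := by
  split_ifs with ha
  · obtain ⟨e₀, rfl⟩ := ha
    simp [hg.eq_iff]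
  · exact sum_eq_zero fun e _ => if_neg fun h => ha ⟨e, h.symm⟩

namespace SimpleGraph

variable {V E R : Type*} {s t : E → V}

lemma edgeSet_fromEdgeSet_range (hst : ∀ e, s e ≠ t e) :
    (fromEdgeSet (Set.range fun e => s(s e, t e))).edgeSet = Set.range fun e => s(s e, t e) := by
  rw [edgeSet_fromEdgeSet, sdiff_eq_left, Set.disjoint_left]
  rintro _ ⟨e, rfl⟩ hdiag
  exact hst e (Sym2.mk_isDiag_iff.1 hdiag)

variable [DecidableEq V]

variable (R) in
def orientedIncMatrix [Ring R] (s t : E → V) : Matrix V E R :=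
  Matrix.of fun v e => (if s e = v then 1 else 0) - (if t e = v then 1 else 0)

lemma orientedIncMatrix_mul_orientedIncMatrix_apply [Ring R] {e : E} (hst : s e ≠ t e)
    (v w : V) :
    orientedIncMatrix R s t v e * orientedIncMatrix R s t w e =
      (if v = w ∧ v ∈ s(s e, t e) then 1 else 0) -
        (if s(v, w) = s(s e, t e) then 1 else 0 : R) := by
  simp only [orientedIncMatrix, Matrix.of_apply, Sym2.mem_iff, Sym2.eq_iff]
  by_cases h1 : s e = v <;> by_cases h2 : t e = v <;> by_cases h3 : s e = w <;>
    by_cases h4 : t e = w <;> simp_all [eq_comm]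

variable [Fintype V] [Fintype E] {G : SimpleGraph V} [DecidableRel G.Adj]

lemma degree_eq_card_filter_mem (hG : G.edgeSet = Set.range fun e => s(s e, t e))
    (hinj : Function.Injective fun e => s(s e, t e)) (v : V) :
    G.degree v = #{e | v ∈ s(s e, t e)} := by
  rw [← card_incidenceFinset_eq_degree, ← card_map ⟨_, hinj⟩]
  congr 1
  ext z
  simp only [mem_map, mem_filter, mem_univ, true_and, mem_incidenceFinset, incidenceSet, hG,
    Set.mem_ofPred_eq, Set.mem_range, Function.Embedding.coeFn_mk]
  constructor
  · rintro ⟨⟨e, rfl⟩, hv⟩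
    exact ⟨e, hv, rfl⟩
  · rintro ⟨e, hv, rfl⟩
    exact ⟨⟨e, rfl⟩, hv⟩

theorem orientedIncMatrix_mul_transpose [Ring R]
    (hG : G.edgeSet = Set.range fun e => s(s e, t e))
    (hinj : Function.Injective fun e => s(s e, t e)) :
    orientedIncMatrix R s t * (orientedIncMatrix R s t)ᵀ = G.lapMatrix R := by
  have hst (e : E) : s e ≠ t e := G.ne_of_adj <| (G.mem_edgeSet).1 <| hG ▸ ⟨e, rfl⟩
  ext v w
  simp only [Matrix.mul_apply, Matrix.transpose_apply,
    orientedIncMatrix_mul_orientedIncMatrix_apply (hst _), sum_sub_distrib,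
    hinj.sum_ite_eq, lapMatrix, degMatrix, Matrix.sub_apply,
    Matrix.diagonal_apply, adjMatrix_apply, ← mem_edgeSet, hG]
  congr 1
  split_ifs with h
  · subst h
    simp [degree_eq_card_filter_mem hG hinj]
  · simp [h]

end SimpleGraph

open SimpleGraph

def incidenceFrame {V E : Type*} [DecidableEq V] (s t : E → V) (v : V) : EuclideanSpace ℂ E :=
  WithLp.toLp 2 fun e => (orientedIncMatrix ℝ s t v e : ℂ)

lemma inner_incidenceFrame {V E : Type*} [DecidableEq V] [Fintype E] (s t : E → V) (v w : V) :
    ⟪incidenceFrame s t v, incidenceFrame s t w⟫ =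
      ((orientedIncMatrix ℝ s t * (orientedIncMatrix ℝ s t)ᵀ) v w : ℂ) := by
  simp [incidenceFrame, PiLp.inner_apply, Matrix.mul_apply, mul_comm]

section Path

variable {n k : ℕ} (hkn : k < n)

def pathTail (e : Fin k) : Fin n := ⟨e, by omega⟩

def pathHead (e : Fin k) : Fin n := ⟨e + 1, by omega⟩

lemma pathTail_ne_pathHead (e : Fin k) : pathTail hkn e ≠ pathHead hkn e := by
  simp [pathTail, pathHead, Fin.ext_iff]

lemma injective_mk_pathTail_pathHead :
    Function.Injective fun e => s(pathTail hkn e, pathHead hkn e) := by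
  intro e e' h
  simp only [pathTail, pathHead, Sym2.eq_iff, Fin.ext_iff] at h
  omega

lemma incidenceFrame_path_apply (v : Fin n) (e : Fin k) :
    incidenceFrame (pathTail hkn) (pathHead hkn) v e =
      (if (v : ℕ) = e then 1 else 0 : ℂ) - (if (v : ℕ) = e + 1 then 1 else 0) := by
  simp only [incidenceFrame, orientedIncMatrix, pathTail, pathHead, Matrix.of_apply, Fin.ext_iff]
  split_ifs <;> first | omega | simp

lemma incidenceFrame_path_zero (hk : 0 < k) :
    incidenceFrame (pathTail hkn) (pathHead hkn) ⟨0, by omega⟩ =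
      EuclideanSpace.single ⟨0, hk⟩ 1 := by
  ext e
  simp [incidenceFrame_path_apply, PiLp.single_apply, Fin.ext_iff, eq_comm]

lemma incidenceFrame_path_succ {m : ℕ} (hm : m + 1 < k) :
    incidenceFrame (pathTail hkn) (pathHead hkn) ⟨m + 1, by omega⟩ =
      EuclideanSpace.single ⟨m + 1, hm⟩ 1 - EuclideanSpace.single ⟨m, by omega⟩ 1 := by
  ext e
  simp only [incidenceFrame_path_apply, PiLp.sub_apply, PiLp.single_apply, Fin.ext_iff]
  split_ifs <;> first | omega | simp

lemma span_incidenceFrame_path :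
    Submodule.span ℂ (Set.range (incidenceFrame (pathTail hkn) (pathHead hkn))) = ⊤ := by
  set S := Submodule.span ℂ (Set.range (incidenceFrame (pathTail hkn) (pathHead hkn)))
  have mem (v : Fin n) : incidenceFrame (pathTail hkn) (pathHead hkn) v ∈ S :=
    Submodule.subset_span ⟨v, rfl⟩
  have single_mem : ∀ m (hm : m < k), EuclideanSpace.single (⟨m, hm⟩ : Fin k) (1 : ℂ) ∈ S := by
    intro m
    induction m with
    | zero =>
      intro hm
      rw [← incidenceFrame_path_zero hkn hm]
      exact mem _
    | succ m ih =>
      intro hm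
      have := S.add_mem (mem ⟨m + 1, by omega⟩) (ih (by omega))
      rwa [incidenceFrame_path_succ hkn hm, sub_add_cancel] at this
  rw [eq_top_iff, ← (EuclideanSpace.basisFun (Fin k) ℂ).toBasis.span_eq, Submodule.span_le]
  rintro _ ⟨m, rfl⟩
  simpa using single_mem m m.isLt

end Path

theorem stmt_1_general (n k : ℕ) (hkn : k < n) :
    ∃ G : SimpleGraph (Fin n), ∃ f : Fin n → EuclideanSpace ℂ (Fin k),
      Submodule.span ℂ (Set.range f) = ⊤ ∧
      ∀ i j : Fin n, ⟪f i, f j⟫ = ((G.lapMatrix ℝ) i j : ℂ) := by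
  refine ⟨fromEdgeSet (Set.range fun e => s(pathTail hkn e, pathHead hkn e)),
    incidenceFrame (pathTail hkn) (pathHead hkn), span_incidenceFrame_path hkn, fun i j => ?_⟩
  rw [inner_incidenceFrame, orientedIncMatrix_mul_transpose
    (edgeSet_fromEdgeSet_range (pathTail_ne_pathHead hkn)) (injective_mk_pathTail_pathHead hkn)]
  -- the two Laplacians differ only in their `DecidableRel` instances
  congr

theorem stmt_1 (n k : ℕ) (hk : 0 < k) (hkn : k < n) :
    ∃ G : SimpleGraph (Fin n), ∃ f : Fin n → EuclideanSpace ℂ (Fin k),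
      Submodule.span ℂ (Set.range f) = ⊤ ∧
      ∀ i j : Fin n, ⟪f i, f j⟫ = ((G.lapMatrix ℝ) i j : ℂ) :=
  stmt_1_general n k hkn
end

section
/- Let G be a simple graph on Fin n whose Laplacian matrix L(G) has rank k, and let f : Fin n → EuclideanSpace ℂ (Fin k) be an L_G(n,k)-frame built from an orthogonal matrix M and eigenvalues μ with (f i) j = √(μ j) · M i j. Define g : Fin n → EuclideanSpace ℂ (Fin k) by (g i) j = (μ j)⁻¹ · (f i) j. Then g is the canonical dual frame of f: S (g i) = f i for all i, where S is the frame operator of f, and consequently v = ∑ i, ⟪f i, v⟫ • g i for every v ∈ EuclideanSpace ℂ (Fin k). -/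
open scoped ComplexInnerProductSpace
open Matrix

/-!
Let `u i ∈ ℂ^k` be the `i`-th row of `M` cut down to its first `k` columns. Since the columns
of `M` are orthonormal, `u` is a Parseval frame: `∑ i, ⟪u i, v⟫ • u i = v`. With the real
diagonal (hence self-adjoint) `D = diag (√μ_j)` we have `f = D ∘ u` and `g = D⁻¹ ∘ u`, so the
frame operator of `f` is `D ∘ S_u ∘ D = D²`, and both identities follow from `S_u = 1`.
-/

section ParsevalFrame

variable (𝕜 : Type*) {E ι : Type*} [RCLike 𝕜] [NormedAddCommGroup E] [InnerProductSpace 𝕜 E]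
  [Fintype ι]

def IsParsevalFrame (u : ι → E) : Prop :=
  ∀ v, ∑ i, inner 𝕜 (u i) v • u i = v

variable {𝕜}

theorem IsParsevalFrame.sum_inner_map_smul_map {F : Type*} [AddCommGroup F] [Module 𝕜 F]
    {u : ι → E} (hu : IsParsevalFrame 𝕜 u) {T : E →ₗ[𝕜] E} (hT : T.IsSymmetric)
    (T' : E →ₗ[𝕜] F) (v : E) :
    ∑ i, inner 𝕜 (T (u i)) v • T' (u i) = T' (T v) := by
  simp only [hT _ v, ← map_smul, ← map_sum]
  rw [hu]

theorem IsParsevalFrame.dual_of_isSymmetric {u : ι → E} (hu : IsParsevalFrame 𝕜 u)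
    {T T' : E →ₗ[𝕜] E} (hT : T.IsSymmetric) (hTT' : Function.LeftInverse T T')
    (hT'T : Function.LeftInverse T' T) :
    (∀ i, ∑ i', inner 𝕜 (T (u i')) (T' (u i)) • T (u i') = T (u i)) ∧
      ∀ v, v = ∑ i, inner 𝕜 (T (u i)) v • T' (u i) := by
  refine ⟨fun i => ?_, fun v => ?_⟩
  · rw [hu.sum_inner_map_smul_map hT, hTT']
  · rw [hu.sum_inner_map_smul_map hT, hT'T]

end ParsevalFrame

theorem Matrix.conjTranspose_mul_self_submatrix {α ι κ κ' : Type*} [Semiring α] [Star α]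
    [Fintype ι] [DecidableEq κ] [DecidableEq κ'] {N : Matrix ι κ α} (hN : Nᴴ * N = 1) {e : κ' → κ}
    (he : Function.Injective e) : (N.submatrix id e)ᴴ * N.submatrix id e = 1 := by
  rw [conjTranspose_submatrix, ← submatrix_mul _ _ _ _ _ Function.bijective_id, hN,
    submatrix_one _ he]

theorem Matrix.conjTranspose_mul_self_map_ofReal {ι κ : Type*} [Fintype ι] [DecidableEq κ]
    {M : Matrix ι κ ℝ} (hM : Mᵀ * M = 1) : (M.map Complex.ofReal)ᴴ * M.map Complex.ofReal = 1 := by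
  ext i j
  simpa [mul_apply, one_apply, apply_ite Complex.ofReal] using
    congrArg Complex.ofReal (congrFun (congrFun hM i) j)

theorem Matrix.isParsevalFrame_rows {𝕜 ι κ : Type*} [RCLike 𝕜] [Fintype ι] [Fintype κ]
    [DecidableEq κ] {N : Matrix ι κ 𝕜} (hN : Nᴴ * N = 1) :
    IsParsevalFrame 𝕜 fun i => WithLp.toLp 2 (N i) := by
  intro v
  ext j
  have hcol : ∀ l, ∑ i, starRingEnd 𝕜 (N i l) * N i j = (1 : Matrix κ κ 𝕜) l j := fun l => by
    rw [← hN, mul_apply]; rfl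
  simp only [PiLp.inner_apply, WithLp.ofLp_sum, WithLp.ofLp_smul, Finset.sum_apply, Pi.smul_apply,
    smul_eq_mul, RCLike.inner_apply, Finset.sum_mul]
  rw [Finset.sum_comm]
  simp only [mul_assoc, ← Finset.mul_sum, hcol, one_apply, mul_ite, mul_one, mul_zero,
    Finset.sum_ite_eq', Finset.mem_univ, if_true]

theorem stmt_5_general (n k : ℕ) (hkn : k ≤ n)
    (M : Matrix (Fin n) (Fin n) ℝ) (hM : M ∈ Matrix.orthogonalGroup (Fin n) ℝ)
    (μ : Fin n → ℝ)
    (hμpos : ∀ j : Fin n, (j : ℕ) < k → 0 < μ j)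
    (f g : Fin n → EuclideanSpace ℂ (Fin k))
    (hf : ∀ (i : Fin n) (j : Fin k),
      f i j = (Real.sqrt (μ (Fin.castLE hkn j)) * M i (Fin.castLE hkn j) : ℂ))
    (hg : ∀ (i : Fin n) (j : Fin k),
      g i j = ((μ (Fin.castLE hkn j) : ℂ))⁻¹ * f i j) :
    (∀ i : Fin n, ∑ i' : Fin n, ⟪f i', g i⟫ • f i' = f i) ∧
    (∀ v : EuclideanSpace ℂ (Fin k), v = ∑ i : Fin n, ⟪f i, v⟫ • g i) := by
  set c := Fin.castLE hkn
  set s : Fin k → ℂ := fun j => (√(μ (c j)) : ℂ)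
  set N := (M.map Complex.ofReal).submatrix id c
  have hμc : ∀ j, 0 < μ (c j) := fun j => hμpos (c j) j.isLt
  have hs : ∀ j, s j ≠ 0 := fun j => by
    simpa [s] using Real.sqrt_ne_zero'.mpr (hμc j)
  have hμ : ∀ j, (μ (c j) : ℂ) = s j * s j := fun j => by
    simp only [s, ← Complex.ofReal_mul, Real.mul_self_sqrt (hμc j).le]
  have hu : IsParsevalFrame ℂ fun i => WithLp.toLp 2 (N i) :=
    isParsevalFrame_rows <| conjTranspose_mul_self_submatrix
      (conjTranspose_mul_self_map_ofReal ((mem_orthogonalGroup_iff' _ _).mp hM))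
      (Fin.castLE_injective hkn)
  have hT : (toEuclideanLin (diagonal s)).IsSymmetric :=
    isSymmetric_toEuclideanLin_iff.mpr <|
      isHermitian_diagonal_of_self_adjoint _ (funext fun j => Complex.conj_ofReal _)
  have hfN : ∀ i j, f i j = s j * N i j := hf
  have hf' : f = fun i => toEuclideanLin (diagonal s) (WithLp.toLp 2 (N i)) := by
    ext i j; simp [hfN, mulVec_diagonal]
  have hg' : g = fun i => toEuclideanLin (diagonal s⁻¹) (WithLp.toLp 2 (N i)) := by
    ext i j
    rw [hg, hμ, hfN]
    simp only [toLpLin_toLp, toLin'_apply, mulVec_diagonal, Pi.inv_apply]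
    field_simp [hs j]
  subst hf' hg'
  exact hu.dual_of_isSymmetric hT (fun v => by ext j; simp [mulVec_diagonal, hs])
    (fun v => by ext j; simp [mulVec_diagonal, hs])

theorem stmt_5 (n k : ℕ) (hkn : k ≤ n)
    (G : SimpleGraph (Fin n)) [DecidableRel G.Adj]
    (hrank : (G.lapMatrix ℝ).rank = k)
    (M : Matrix (Fin n) (Fin n) ℝ) (hM : M ∈ Matrix.orthogonalGroup (Fin n) ℝ)
    (μ : Fin n → ℝ)
    (hμpos : ∀ j : Fin n, (j : ℕ) < k → 0 < μ j)
    (hμzero : ∀ j : Fin n, k ≤ (j : ℕ) → μ j = 0)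
    (hL : G.lapMatrix ℝ = M * Matrix.diagonal μ * Mᵀ)
    (f g : Fin n → EuclideanSpace ℂ (Fin k))
    (hf : ∀ (i : Fin n) (j : Fin k),
      f i j = (Real.sqrt (μ (Fin.castLE hkn j)) * M i (Fin.castLE hkn j) : ℂ))
    (hg : ∀ (i : Fin n) (j : Fin k),
      g i j = ((μ (Fin.castLE hkn j) : ℂ))⁻¹ * f i j) :
    (∀ i : Fin n, ∑ i' : Fin n, ⟪f i', g i⟫ • f i' = f i) ∧
    (∀ v : EuclideanSpace ℂ (Fin k), v = ∑ i : Fin n, ⟪f i, v⟫ • g i) :=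
  stmt_5_general n k hkn M hM μ hμpos f g hf hg
end

section
/- Let G be a connected simple graph on Fin n (n ≥ 2), let f : Fin n → EuclideanSpace ℂ (Fin (n−1)) be a G(n,n−1)-frame (f spans ℂ^{n−1} and its Gramian matrix equals L(G)), and let S be the frame operator of f (which is invertible). Then a family g : Fin n → EuclideanSpace ℂ (Fin (n−1)) is a dual frame of f if and only if there exists a vector h ∈ EuclideanSpace ℂ (Fin (n−1)) such that g i = S⁻¹ (f i) + h for every i ∈ Fin n. -/
/-!
The Laplacian has zero row sums, so `⟪f j, ∑ i, f i⟫ = 0` for every `j`, and since `f` spans,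
`∑ i, f i = 0`. The analysis operator `v ↦ (⟪f i, v⟫)ᵢ` is then injective with range inside the
hyperplane `∑ i, cᵢ = 0`; counting dimensions (`n` vectors in an `(n - 1)`-dimensional space), the
range is the whole hyperplane. A family `g` is dual to `f` iff `u := g - S⁻¹ ∘ f` satisfies
`∑ i, ⟪f i, v⟫ • u i = 0` for all `v`, i.e. `c ↦ ∑ i, cᵢ • u i` vanishes on the hyperplane; applied to
`eᵢ - eⱼ` this says `u` is constant.
-/

open scoped InnerProductSpace

open Module

namespace Frame

variable {𝕜 E ι : Type*} [RCLike 𝕜] [NormedAddCommGroup E] [InnerProductSpace 𝕜 E]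

variable (𝕜) in
def analysisOperator (f : ι → E) : E →ₗ[𝕜] ι → 𝕜 :=
  LinearMap.pi fun i => innerₛₗ 𝕜 (f i)

@[simp]
theorem analysisOperator_apply (f : ι → E) (v : E) (i : ι) :
    analysisOperator 𝕜 f v i = ⟪f i, v⟫_𝕜 :=
  rfl

variable {f : ι → E}

theorem eq_zero_of_forall_inner_eq_zero (hf : Submodule.span 𝕜 (Set.range f) = ⊤) {w : E}
    (hw : ∀ i, ⟪f i, w⟫_𝕜 = 0) : w = 0 := by
  have : innerₛₗ 𝕜 w = 0 :=
    LinearMap.ext_on_range hf fun i => by simpa [inner_eq_zero_symm] using hw i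
  simpa using LinearMap.congr_fun this w

theorem analysisOperator_injective (hf : Submodule.span 𝕜 (Set.range f) = ⊤) :
    Function.Injective (analysisOperator 𝕜 f) := by
  rw [← LinearMap.ker_eq_bot, Submodule.eq_bot_iff]
  exact fun w hw => eq_zero_of_forall_inner_eq_zero hf fun i => congrFun hw i

variable [Fintype ι]

theorem sum_eq_zero_of_forall_sum_inner_eq_zero (hf : Submodule.span 𝕜 (Set.range f) = ⊤)
    (h : ∀ j, ∑ i, ⟪f j, f i⟫_𝕜 = 0) : ∑ i, f i = 0 :=
  eq_zero_of_forall_inner_eq_zero hf fun j => by rw [inner_sum, h]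

theorem sum_inner_eq_zero (hsum : ∑ i, f i = 0) (v : E) : ∑ i, ⟪f i, v⟫_𝕜 = 0 := by
  rw [← sum_inner, hsum, inner_zero_left]

variable (𝕜 ι) in
abbrev sumFunctional : (ι → 𝕜) →ₗ[𝕜] 𝕜 := Fintype.linearCombination 𝕜 1

theorem finrank_ker_sumFunctional [Nonempty ι] :
    finrank 𝕜 (LinearMap.ker (sumFunctional 𝕜 ι)) + 1 = Fintype.card ι := by
  classical
  obtain ⟨i⟩ := ‹Nonempty ι›
  have hsurj : LinearMap.range (sumFunctional 𝕜 ι) = ⊤ :=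
    LinearMap.range_eq_top.mpr fun c => ⟨Pi.single i c, by simp⟩
  have := LinearMap.finrank_range_add_finrank_ker (sumFunctional 𝕜 ι)
  rw [hsurj, finrank_top, finrank_self, finrank_fintype_fun_eq_card] at this
  omega

theorem range_analysisOperator_eq_ker [FiniteDimensional 𝕜 E]
    (hf : Submodule.span 𝕜 (Set.range f) = ⊤) (hsum : ∑ i, f i = 0)
    (hcard : Fintype.card ι = finrank 𝕜 E + 1) :
    LinearMap.range (analysisOperator 𝕜 f) = LinearMap.ker (sumFunctional 𝕜 ι) := by
  have : Nonempty ι := Fintype.card_pos_iff.mp (by omega)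
  refine Submodule.eq_of_le_of_finrank_le ?_ ?_
  · rintro _ ⟨v, rfl⟩
    simpa [Fintype.linearCombination_apply] using sum_inner_eq_zero hsum v
  · have := finrank_ker_sumFunctional (𝕜 := 𝕜) (ι := ι)
    rw [LinearMap.finrank_range_of_inj (analysisOperator_injective hf)]
    omega

theorem eq_of_forall_sum_inner_smul_eq_zero [FiniteDimensional 𝕜 E]
    (hf : Submodule.span 𝕜 (Set.range f) = ⊤) (hsum : ∑ i, f i = 0)
    (hcard : Fintype.card ι = finrank 𝕜 E + 1) {u : ι → E}
    (hu : ∀ v, ∑ i, ⟪f i, v⟫_𝕜 • u i = 0) (i j : ι) : u i = u j := by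
  classical
  have hdiff : (Pi.single i 1 - Pi.single j 1 : ι → 𝕜) ∈ LinearMap.ker (sumFunctional 𝕜 ι) := by
    simp
  rw [← range_analysisOperator_eq_ker hf hsum hcard] at hdiff
  obtain ⟨v, hv⟩ := hdiff
  have := congrArg (Fintype.linearCombination 𝕜 u) hv
  rw [Fintype.linearCombination_apply] at this
  simpa [sub_eq_zero, hu v] using this.symm

theorem sum_inner_smul_symm_eq (S : E ≃ₗ[𝕜] E) (hS : ∀ v, S v = ∑ i, ⟪f i, v⟫_𝕜 • f i) (v : E) :
    ∑ i, ⟪f i, v⟫_𝕜 • S.symm (f i) = v := by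
  simp_rw [← map_smul, ← map_sum, ← hS, S.symm_apply_apply]

theorem forall_eq_sum_inner_smul_iff [FiniteDimensional 𝕜 E]
    (hf : Submodule.span 𝕜 (Set.range f) = ⊤) (hsum : ∑ i, f i = 0)
    (hcard : Fintype.card ι = finrank 𝕜 E + 1)
    (S : E ≃ₗ[𝕜] E) (hS : ∀ v, S v = ∑ i, ⟪f i, v⟫_𝕜 • f i) (g : ι → E) :
    (∀ v, v = ∑ i, ⟪f i, v⟫_𝕜 • g i) ↔ ∃ h, ∀ i, g i = S.symm (f i) + h := by
  constructor
  · intro hg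
    obtain ⟨i₀⟩ : Nonempty ι := Fintype.card_pos_iff.mp (by omega)
    have hu : ∀ v, ∑ i, ⟪f i, v⟫_𝕜 • (g i - S.symm (f i)) = 0 := fun v => by
      simp_rw [smul_sub, Finset.sum_sub_distrib, sum_inner_smul_symm_eq S hS, ← hg, sub_self]
    refine ⟨g i₀ - S.symm (f i₀), fun i => ?_⟩
    rw [← eq_of_forall_sum_inner_smul_eq_zero hf hsum hcard hu i i₀, add_sub_cancel]
  · rintro ⟨h, hg⟩ v
    simp_rw [hg, smul_add, Finset.sum_add_distrib, ← Finset.sum_smul, sum_inner_eq_zero hsum,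
      zero_smul, add_zero, sum_inner_smul_symm_eq S hS]

end Frame

open scoped ComplexInnerProductSpace

theorem stmt_6_general (n : ℕ) (hn : 2 ≤ n)
    (G : SimpleGraph (Fin n)) [DecidableRel G.Adj]
    (f : Fin n → EuclideanSpace ℂ (Fin (n - 1)))
    (hf_span : Submodule.span ℂ (Set.range f) = ⊤)
    (hf_gram : ∀ i j : Fin n, ⟪f i, f j⟫ = ((G.lapMatrix ℝ) i j : ℂ))
    (S : EuclideanSpace ℂ (Fin (n - 1)) ≃ₗ[ℂ] EuclideanSpace ℂ (Fin (n - 1)))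
    (hS : ∀ v : EuclideanSpace ℂ (Fin (n - 1)), S v = ∑ i : Fin n, ⟪f i, v⟫ • f i)
    (g : Fin n → EuclideanSpace ℂ (Fin (n - 1))) :
    (∀ v : EuclideanSpace ℂ (Fin (n - 1)), v = ∑ i : Fin n, ⟪f i, v⟫ • g i) ↔
    (∃ h : EuclideanSpace ℂ (Fin (n - 1)), ∀ i : Fin n, g i = S.symm (f i) + h) := by
  have hrow : ∀ j, ∑ i, G.lapMatrix ℝ j i = 0 := fun j => by
    simpa [Matrix.mulVec, dotProduct] using congrFun (G.lapMatrix_mulVec_const_eq_zero (R := ℝ)) j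
  have hsum : ∑ i, f i = 0 := Frame.sum_eq_zero_of_forall_sum_inner_eq_zero hf_span fun j => by
    simp_rw [hf_gram, ← Complex.ofReal_sum, hrow, Complex.ofReal_zero]
  have hcard : Fintype.card (Fin n) = finrank ℂ (EuclideanSpace ℂ (Fin (n - 1))) + 1 := by
    rw [Fintype.card_fin, finrank_euclideanSpace_fin]
    omega
  exact Frame.forall_eq_sum_inner_smul_iff hf_span hsum hcard S hS g

theorem stmt_6 (n : ℕ) (hn : 2 ≤ n)
    (G : SimpleGraph (Fin n)) [DecidableRel G.Adj] (hG : G.Connected)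
    (f : Fin n → EuclideanSpace ℂ (Fin (n - 1)))
    (hf_span : Submodule.span ℂ (Set.range f) = ⊤)
    (hf_gram : ∀ i j : Fin n, ⟪f i, f j⟫ = ((G.lapMatrix ℝ) i j : ℂ))
    (S : EuclideanSpace ℂ (Fin (n - 1)) ≃ₗ[ℂ] EuclideanSpace ℂ (Fin (n - 1)))
    (hS : ∀ v : EuclideanSpace ℂ (Fin (n - 1)), S v = ∑ i : Fin n, ⟪f i, v⟫ • f i)
    (g : Fin n → EuclideanSpace ℂ (Fin (n - 1))) :
    (∀ v : EuclideanSpace ℂ (Fin (n - 1)), v = ∑ i : Fin n, ⟪f i, v⟫ • g i) ↔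
    (∃ h : EuclideanSpace ℂ (Fin (n - 1)), ∀ i : Fin n, g i = S.symm (f i) + h) :=
  stmt_6_general n hn G f hf_span hf_gram S hS g
end

section
/- Let G be a connected simple graph on Fin n (n ≥ 2), so its Laplacian matrix has rank n−1, and let f : Fin n → EuclideanSpace ℂ (Fin (n−1)) be an L_G(n,n−1)-frame built from an orthogonal matrix M and eigenvalues μ₁ ≥ … ≥ μ_{n−1} > μ_n = 0 with (f i) j = √(μ j) · M i j. Let D be the diagonal matrix diag(μ₁⁻¹,…,μ_{n−1}⁻¹). Then g : Fin n → EuclideanSpace ℂ (Fin (n−1)) is a dual frame of f if and only if there exists h ∈ EuclideanSpace ℂ (Fin (n−1)) such that g i = D · (f i) + h for every i ∈ Fin n. -/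
/-!
Write `F` for the `n × (n - 1)` matrix `F i j = f i j = √μⱼ M i j`. Its columns are orthogonal with
squared norms `μⱼ`, so `g i = D (f i)` is one dual frame, and `g` is a dual frame iff for every
`j` the vector `i ↦ g i j - μⱼ⁻¹ f i j` is orthogonal to the first `n - 1` columns of `M`, i.e.
lies on the line spanned by the last column of `M`. That column spans the kernel of `L(G)`,
which for connected `G` consists of the constant vectors.
-/

open scoped ComplexInnerProductSpace
open Matrix

namespace Matrix

section CommRing

variable {ι R : Type*} [Fintype ι] [DecidableEq ι] [CommRing R] {M : Matrix ι ι R}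

theorem mul_diagonal_mul_transpose_mulVec_col (hM : Mᵀ * M = 1) (μ : ι → R) (b : ι) :
    (M * diagonal μ * Mᵀ) *ᵥ M.col b = μ b • M.col b := by
  rw [← mulVec_single_one, mulVec_mulVec, Matrix.mul_assoc, Matrix.mul_assoc, hM,
    Matrix.mul_one, ← mulVec_mulVec, diagonal_mulVec_single, mul_one, mulVec_single]
  ext i
  simp [mul_comm]

theorem forall_ne_transpose_mulVec_eq_zero_iff (hM : Mᵀ * M = 1) (b : ι) (w : ι → R) :
    (∀ a ≠ b, (Mᵀ *ᵥ w) a = 0) ↔ ∃ c : R, w = c • M.col b := by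
  constructor
  · intro hw
    refine ⟨(Mᵀ *ᵥ w) b, ?_⟩
    have hsingle : Mᵀ *ᵥ w = Pi.single b ((Mᵀ *ᵥ w) b) := by
      ext a
      rcases eq_or_ne a b with rfl | hab
      · simp
      · simp [hab, hw a hab]
    calc w = M *ᵥ (Mᵀ *ᵥ w) := by rw [mulVec_mulVec, mul_eq_one_comm.mp hM, one_mulVec]
      _ = (Mᵀ *ᵥ w) b • M.col b := by
        rw [hsingle, mulVec_single]
        ext i
        simp [mul_comm]
  · rintro ⟨c, rfl⟩ a hab
    rw [mulVec_smul, ← mulVec_single_one, mulVec_mulVec, hM, one_mulVec]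
    simp [hab]

theorem transpose_map_mul_map_eq_one {S : Type*} [CommRing S] (φ : R →+* S)
    (hM : Mᵀ * M = 1) : (M.map φ)ᵀ * M.map φ = 1 := by
  have := congrArg φ.mapMatrix hM
  rwa [map_mul, map_one, RingHom.mapMatrix_apply, RingHom.mapMatrix_apply, transpose_map] at this

end CommRing

theorem exists_eq_smul_col_iff_of_col_const {ι K : Type*} [Fintype ι] [DecidableEq ι] [Field K]
    {M : Matrix ι ι K} (hM : Mᵀ * M = 1) {b : ι} (hcol : ∀ i i', M i b = M i' b) (w : ι → K) :
    (∃ c : K, w = c • M.col b) ↔ ∃ c, ∀ i, w i = c := by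
  obtain ⟨i₀, hi₀⟩ : ∃ i₀, M i₀ b ≠ 0 := by
    by_contra! h
    have := congrFun (congrFun hM b) b
    simp [mul_apply, h] at this
  constructor
  · rintro ⟨c, rfl⟩
    exact ⟨c * M i₀ b, fun i => by simp [hcol i i₀]⟩
  · rintro ⟨c, hc⟩
    refine ⟨c / M i₀ b, funext fun i => ?_⟩
    simp [hc, hcol i i₀, hi₀]

end Matrix

theorem Fin.forall_castLE_eq_zero_iff {α : Type*} [Zero α] {n : ℕ} (hk : n - 1 ≤ n)
    (hn : n - 1 < n) (v : Fin n → α) :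
    (∀ l : Fin (n - 1), v (Fin.castLE hk l) = 0) ↔ ∀ a ≠ ⟨n - 1, hn⟩, v a = 0 := by
  refine ⟨fun h a ha => ?_, fun h l => h _ fun hl => ?_⟩
  · have : (a : ℕ) < n - 1 := by
      have := Fin.val_ne_of_ne ha
      simp only at this
      omega
    exact h ⟨a, this⟩
  · have := congrArg Fin.val hl
    simp at this
    omega

theorem SimpleGraph.Connected.col_eq_of_lapMatrix_eq {V : Type*} [Fintype V] [DecidableEq V]
    {G : SimpleGraph V} [DecidableRel G.Adj] (hG : G.Connected) {M : Matrix V V ℝ} {μ : V → ℝ}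
    (hM : Mᵀ * M = 1) (hL : G.lapMatrix ℝ = M * diagonal μ * Mᵀ) {b : V} (hb : μ b = 0)
    (i i' : V) : M i b = M i' b := by
  have hker := mul_diagonal_mul_transpose_mulVec_col hM μ b
  rw [← hL, hb, zero_smul, SimpleGraph.lapMatrix_mulVec_eq_zero_iff_forall_reachable] at hker
  exact hker i i' (hG.preconnected i i')

theorem forall_eq_sum_inner_smul_iff {𝕜 ι κ : Type*} [RCLike 𝕜] [Fintype ι] [Fintype κ]
    [DecidableEq κ] (f g : ι → EuclideanSpace 𝕜 κ) :
    (∀ v : EuclideanSpace 𝕜 κ, v = ∑ i, inner 𝕜 (f i) v • g i) ↔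
      ∀ l j, ∑ i, starRingEnd 𝕜 (f i l) * g i j = if l = j then 1 else 0 := by
  have hcoord (v : EuclideanSpace 𝕜 κ) (j : κ) :
      (∑ i, inner 𝕜 (f i) v • g i) j = ∑ l, v l * ∑ i, starRingEnd 𝕜 (f i l) * g i j := by
    simp only [WithLp.ofLp_sum, Finset.sum_apply, PiLp.smul_apply, smul_eq_mul, PiLp.inner_apply,
      RCLike.inner_apply, Finset.sum_mul, Finset.mul_sum]
    rw [Finset.sum_comm]
    exact Finset.sum_congr rfl fun _ _ => Finset.sum_congr rfl fun _ _ => by ring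
  constructor
  · intro h l j
    have := congrArg (· j) (h (EuclideanSpace.single l 1))
    simpa [hcoord, PiLp.single_apply, eq_comm] using this.symm
  · intro h v
    ext j
    simp [hcoord, h]

namespace ScaledColumns

variable {n k : ℕ} {hk : k ≤ n} {M : Matrix (Fin n) (Fin n) ℝ} {μ : Fin n → ℝ}
  {f : Fin n → EuclideanSpace ℂ (Fin k)}
  (hf : ∀ i j, f i j = (Real.sqrt (μ (Fin.castLE hk j)) * M i (Fin.castLE hk j) : ℂ))
include hf

theorem conj_apply (i : Fin n) (j : Fin k) : starRingEnd ℂ (f i j) = f i j := by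
  simp [hf]

theorem sum_apply_mul_apply (hM : Mᵀ * M = 1) (hμ : ∀ j, 0 ≤ μ (Fin.castLE hk j))
    (l j : Fin k) : ∑ i, f i l * f i j = if l = j then (μ (Fin.castLE hk j) : ℂ) else 0 := by
  have horth := congrFun (congrFun hM (Fin.castLE hk l)) (Fin.castLE hk j)
  simp only [mul_apply, transpose_apply, one_apply, Fin.castLE_inj] at horth
  calc ∑ i, f i l * f i j
      = (√(μ (Fin.castLE hk l)) * √(μ (Fin.castLE hk j)) *
          ∑ i, M i (Fin.castLE hk l) * M i (Fin.castLE hk j) : ℝ) := by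
        push_cast [hf, Finset.mul_sum]
        exact Finset.sum_congr rfl fun _ _ => by ring
    _ = _ := by
        rw [horth]
        split_ifs with hlj
        · subst hlj
          simp [Real.mul_self_sqrt (hμ l)]
        · simp

theorem sum_apply_mul_eq_zero_iff {l : Fin k} (hμ : 0 < μ (Fin.castLE hk l)) (w : Fin n → ℂ) :
    ∑ i, f i l * w i = 0 ↔
      ((M.map (↑) : Matrix (Fin n) (Fin n) ℂ)ᵀ *ᵥ w) (Fin.castLE hk l) = 0 := by
  have hsqrt : (√(μ (Fin.castLE hk l)) : ℂ) ≠ 0 := by exact_mod_cast (Real.sqrt_pos.mpr hμ).ne'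
  simp only [hf, mul_assoc, ← Finset.mul_sum, mul_eq_zero, hsqrt, false_or]
  simp [mulVec, dotProduct]

theorem forall_sum_conj_apply_mul_eq_ite_iff (hM : Mᵀ * M = 1)
    (hμ : ∀ j, 0 < μ (Fin.castLE hk j)) (g : Fin n → EuclideanSpace ℂ (Fin k)) (j : Fin k) :
    (∀ l, ∑ i, starRingEnd ℂ (f i l) * g i j = if l = j then 1 else 0) ↔
      ∀ l, ((M.map (↑) : Matrix (Fin n) (Fin n) ℂ)ᵀ *ᵥ
        fun i => g i j - (μ (Fin.castLE hk j) : ℂ)⁻¹ * f i j) (Fin.castLE hk l) = 0 := by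
  have hμj : (μ (Fin.castLE hk j) : ℂ) ≠ 0 := by exact_mod_cast (hμ j).ne'
  refine forall_congr' fun l => ?_
  rw [← sum_apply_mul_eq_zero_iff hf (hμ l)]
  simp only [conj_apply hf, mul_sub, Finset.sum_sub_distrib, mul_left_comm _ (_⁻¹ : ℂ),
    ← Finset.mul_sum, sum_apply_mul_apply hf hM (fun j => (hμ j).le), sub_eq_zero]
  split_ifs <;> simp [hμj]

end ScaledColumns

theorem stmt_7_general (n : ℕ) (hn : 2 ≤ n) (hkn : n - 1 ≤ n)
    (G : SimpleGraph (Fin n)) [DecidableRel G.Adj] (hG : G.Connected)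
    (M : Matrix (Fin n) (Fin n) ℝ) (hM : M ∈ Matrix.orthogonalGroup (Fin n) ℝ)
    (μ : Fin n → ℝ)
    (hμpos : ∀ j : Fin n, (j : ℕ) < n - 1 → 0 < μ j)
    (hμzero : ∀ j : Fin n, n - 1 ≤ (j : ℕ) → μ j = 0)
    (hL : G.lapMatrix ℝ = M * Matrix.diagonal μ * Mᵀ)
    (f : Fin n → EuclideanSpace ℂ (Fin (n - 1)))
    (hf : ∀ (i : Fin n) (j : Fin (n - 1)),
      f i j = (Real.sqrt (μ (Fin.castLE hkn j)) * M i (Fin.castLE hkn j) : ℂ))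
    (g : Fin n → EuclideanSpace ℂ (Fin (n - 1))) :
    (∀ v : EuclideanSpace ℂ (Fin (n - 1)), v = ∑ i : Fin n, ⟪f i, v⟫ • g i) ↔
    (∃ h : EuclideanSpace ℂ (Fin (n - 1)), ∀ (i : Fin n) (j : Fin (n - 1)),
      g i j = ((μ (Fin.castLE hkn j) : ℂ))⁻¹ * f i j + h j) := by
  have hn1 : n - 1 < n := by omega
  have hMt : Mᵀ * M = 1 := (mem_orthogonalGroup_iff' _ _).mp hM
  have hMc : (M.map (↑) : Matrix (Fin n) (Fin n) ℂ)ᵀ * M.map (↑) = 1 :=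
    transpose_map_mul_map_eq_one Complex.ofRealHom hMt
  have hconst (i i' : Fin n) : (M.map (↑) : Matrix (Fin n) (Fin n) ℂ) i ⟨n - 1, hn1⟩ =
      M.map (↑) i' ⟨n - 1, hn1⟩ := by
    simp [hG.col_eq_of_lapMatrix_eq hMt hL (hμzero ⟨n - 1, hn1⟩ le_rfl) i i']
  rw [forall_eq_sum_inner_smul_iff, forall_comm]
  simp_rw [ScaledColumns.forall_sum_conj_apply_mul_eq_ite_iff hf hMt (fun j => hμpos _ j.isLt),
    Fin.forall_castLE_eq_zero_iff hkn hn1, forall_ne_transpose_mulVec_eq_zero_iff hMc,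
    exists_eq_smul_col_iff_of_col_const hMc hconst, sub_eq_iff_eq_add']
  rw [Classical.skolem, (WithLp.equiv 2 (Fin (n - 1) → ℂ)).exists_congr_left]
  simp only [WithLp.equiv_symm_apply, WithLp.ofLp_toLp]
  exact exists_congr fun _ => forall_comm

theorem stmt_7 (n : ℕ) (hn : 2 ≤ n) (hkn : n - 1 ≤ n)
    (G : SimpleGraph (Fin n)) [DecidableRel G.Adj] (hG : G.Connected)
    (M : Matrix (Fin n) (Fin n) ℝ) (hM : M ∈ Matrix.orthogonalGroup (Fin n) ℝ)
    (μ : Fin n → ℝ) (hμmono : ∀ i j : Fin n, i ≤ j → μ j ≤ μ i)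
    (hμpos : ∀ j : Fin n, (j : ℕ) < n - 1 → 0 < μ j)
    (hμzero : ∀ j : Fin n, n - 1 ≤ (j : ℕ) → μ j = 0)
    (hL : G.lapMatrix ℝ = M * Matrix.diagonal μ * Mᵀ)
    (f : Fin n → EuclideanSpace ℂ (Fin (n - 1)))
    (hf : ∀ (i : Fin n) (j : Fin (n - 1)),
      f i j = (Real.sqrt (μ (Fin.castLE hkn j)) * M i (Fin.castLE hkn j) : ℂ))
    (g : Fin n → EuclideanSpace ℂ (Fin (n - 1))) :
    (∀ v : EuclideanSpace ℂ (Fin (n - 1)), v = ∑ i : Fin n, ⟪f i, v⟫ • g i) ↔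
    (∃ h : EuclideanSpace ℂ (Fin (n - 1)), ∀ (i : Fin n) (j : Fin (n - 1)),
      g i j = ((μ (Fin.castLE hkn j) : ℂ))⁻¹ * f i j + h j) :=
  stmt_7_general n hn hkn G hG M hM μ hμpos hμzero hL f hf g
end

section
/- Let G be a simple graph on Fin n, let f : Fin n → EuclideanSpace ℂ (Fin k) be a G(n,k)-frame with invertible frame operator S, and let g : Fin n → EuclideanSpace ℂ (Fin k) be a dual frame of f. Then the function i ↦ g i − S⁻¹ (f i) is constant on each connected component of G: for all vertices i, j ∈ Fin n with G.Reachable i j, one has g i − S⁻¹ (f i) = g j − S⁻¹ (f j). -/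
/-!
Both `g` and the canonical dual `S⁻¹ ∘ f` are dual frames of `f`, so `h := g - S⁻¹ ∘ f` satisfies
`∑ i, ⟪f i, v⟫ • h i = 0` for every `v`. Taking `v = ∑ j, w j • f j` turns the coefficients into
the Gramian applied to `w`, i.e. `L w` for the Laplacian `L`, so `h` is annihilated by the range
of `L`. Since `L` is symmetric, its range is `(ker L)ᗮ`, and `ker L` consists of the vectors that
are constant on connected components; hence `e i - e j` lies in the range of `L` whenever `i` and
`j` are joined by a walk, which gives `h i = h j`.
-/

open scoped ComplexInnerProductSpace

open Matrix

theorem LinearMap.IsSymmetric.range_eq_orthogonal_ker {𝕜 E : Type*} [RCLike 𝕜]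
    [NormedAddCommGroup E] [InnerProductSpace 𝕜 E] [FiniteDimensional 𝕜 E] {T : E →ₗ[𝕜] E}
    (hT : T.IsSymmetric) : LinearMap.range T = (LinearMap.ker T)ᗮ := by
  rw [← hT.orthogonal_range, Submodule.orthogonal_orthogonal]

namespace SimpleGraph

variable {V : Type*} [Fintype V] [DecidableEq V] (G : SimpleGraph V) [DecidableRel G.Adj]

theorem exists_lapMatrix_mulVec_eq_single_sub_single {i j : V} (h : G.Reachable i j) :
    ∃ w : V → ℝ, G.lapMatrix ℝ *ᵥ w = Pi.single i 1 - Pi.single j 1 := by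
  have hT : (toEuclideanLin (G.lapMatrix ℝ)).IsSymmetric :=
    isSymmetric_toEuclideanLin_iff.mpr (G.isHermitian_lapMatrix ℝ)
  have hmem : EuclideanSpace.single i (1 : ℝ) - EuclideanSpace.single j 1 ∈
      (LinearMap.ker (toEuclideanLin (G.lapMatrix ℝ)))ᗮ := by
    refine (Submodule.mem_orthogonal _ _).mpr fun z hz => ?_
    have hz' : G.lapMatrix ℝ *ᵥ z.ofLp = 0 := by
      simpa [ofLp_toLpLin, toLin'_apply] using congrArg WithLp.ofLp hz
    simp [inner_sub_right, EuclideanSpace.inner_single_right,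
      G.lapMatrix_mulVec_eq_zero_iff_forall_reachable.mp hz' i j h]
  rw [← hT.range_eq_orthogonal_ker] at hmem
  obtain ⟨w, hw⟩ := hmem
  exact ⟨w.ofLp, by simpa [ofLp_toLpLin, toLin'_apply] using congrArg WithLp.ofLp hw⟩

end SimpleGraph

section DualFrame

open scoped InnerProductSpace

variable {𝕜 E ι : Type*} [RCLike 𝕜] [NormedAddCommGroup E] [InnerProductSpace 𝕜 E] [Fintype ι]

theorem eq_sum_inner_smul_symm_of_frameOperator {f : ι → E} {S : E ≃ₗ[𝕜] E}
    (hS : ∀ v, S v = ∑ i, ⟪f i, v⟫_𝕜 • f i) (v : E) :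
    v = ∑ i, ⟪f i, v⟫_𝕜 • S.symm (f i) := by
  simp_rw [← map_smul, ← map_sum, ← hS, LinearEquiv.symm_apply_apply]

theorem sum_inner_smul_sub_eq_zero_of_dual {f g g' : ι → E}
    (hg : ∀ v, v = ∑ i, ⟪f i, v⟫_𝕜 • g i) (hg' : ∀ v, v = ∑ i, ⟪f i, v⟫_𝕜 • g' i) (v : E) :
    ∑ i, ⟪f i, v⟫_𝕜 • (g i - g' i) = 0 := by
  simp_rw [smul_sub, Finset.sum_sub_distrib, ← hg, ← hg', sub_self]

theorem sum_gram_mulVec_smul_eq_zero {f h : ι → E}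
    (hh : ∀ v, ∑ i, ⟪f i, v⟫_𝕜 • h i = 0) (w : ι → 𝕜) :
    ∑ i, (gram 𝕜 f *ᵥ w) i • h i = 0 := by
  convert hh (∑ j, w j • f j) using 3 with i
  simp [mulVec, dotProduct, gram_apply, inner_sum, inner_smul_right, mul_comm]

end DualFrame

theorem stmt_8_general (n k : ℕ) (G : SimpleGraph (Fin n)) [DecidableRel G.Adj]
    (f : Fin n → EuclideanSpace ℂ (Fin k))
    (hf_gram : ∀ i j : Fin n, ⟪f i, f j⟫ = ((G.lapMatrix ℝ) i j : ℂ))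
    (S : EuclideanSpace ℂ (Fin k) ≃ₗ[ℂ] EuclideanSpace ℂ (Fin k))
    (hS : ∀ v : EuclideanSpace ℂ (Fin k), S v = ∑ i : Fin n, ⟪f i, v⟫ • f i)
    (g : Fin n → EuclideanSpace ℂ (Fin k))
    (hg_dual : ∀ v : EuclideanSpace ℂ (Fin k), v = ∑ i : Fin n, ⟪f i, v⟫ • g i) :
    ∀ i j : Fin n, G.Reachable i j →
      g i - S.symm (f i) = g j - S.symm (f j) := by
  intro i j hij
  obtain ⟨w, hw⟩ := G.exists_lapMatrix_mulVec_eq_single_sub_single hij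
  have hgram : gram ℂ f = (G.lapMatrix ℝ).map Complex.ofRealHom := Matrix.ext hf_gram
  have hmulVec : gram ℂ f *ᵥ (Complex.ofRealHom ∘ w) =
      Complex.ofRealHom ∘ (Pi.single i 1 - Pi.single j 1) := by
    rw [hgram, ← hw]
    exact funext fun a => (RingHom.map_mulVec _ _ _ a).symm
  have key := sum_gram_mulVec_smul_eq_zero
    (sum_inner_smul_sub_eq_zero_of_dual hg_dual (eq_sum_inner_smul_symm_of_frameOperator hS))
    (Complex.ofRealHom ∘ w)
  rw [hmulVec] at key
  simpa [Pi.single_apply, sub_smul, Finset.sum_sub_distrib, sub_eq_zero] using key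

theorem stmt_8 (n k : ℕ) (G : SimpleGraph (Fin n)) [DecidableRel G.Adj]
    (f : Fin n → EuclideanSpace ℂ (Fin k))
    (hf_span : Submodule.span ℂ (Set.range f) = ⊤)
    (hf_gram : ∀ i j : Fin n, ⟪f i, f j⟫ = ((G.lapMatrix ℝ) i j : ℂ))
    (S : EuclideanSpace ℂ (Fin k) ≃ₗ[ℂ] EuclideanSpace ℂ (Fin k))
    (hS : ∀ v : EuclideanSpace ℂ (Fin k), S v = ∑ i : Fin n, ⟪f i, v⟫ • f i)
    (g : Fin n → EuclideanSpace ℂ (Fin k))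
    (hg_dual : ∀ v : EuclideanSpace ℂ (Fin k), v = ∑ i : Fin n, ⟪f i, v⟫ • g i) :
    ∀ i j : Fin n, G.Reachable i j →
      g i - S.symm (f i) = g j - S.symm (f j) :=
  stmt_8_general n k G f hf_gram S hS g hg_dual
end

section
/- Let G be a simple graph on Fin n and let f : Fin n → EuclideanSpace ℂ (Fin k) be a G(n,k)-frame. If f is a tight frame (there exists α > 0 with ∑ i, ‖⟪f i, v⟫‖² = α · ‖v‖² for all v), then each connected component of G is a regular graph: for all vertices u, v ∈ Fin n with G.Reachable u v, the degrees satisfy G.degree u = G.degree v. -/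
/-!
Testing the tightness identity on the frame vector `f u` turns it into
`∑ᵢ L(i,u)² = α · L(u,u)`. The column of the Laplacian at `u` has `deg u` on the diagonal and `-1`
at each neighbour, so this reads `deg u ² + deg u = α · deg u`: every non-isolated vertex has
degree `α - 1`, and two distinct vertices in the same component are both non-isolated.
-/

open scoped ComplexInnerProductSpace

namespace SimpleGraph

variable {V R : Type*} [Fintype V] [DecidableEq V] (G : SimpleGraph V) [DecidableRel G.Adj]

theorem lapMatrix_apply_self [AddGroupWithOne R] (u : V) : G.lapMatrix R u u = G.degree u := by
  simp [lapMatrix, degMatrix]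

theorem lapMatrix_apply_of_adj [AddGroupWithOne R] {u v : V} (h : G.Adj u v) :
    G.lapMatrix R u v = -1 := by
  simp [lapMatrix, degMatrix, h.ne, h]

theorem sum_lapMatrix_apply_sq [CommRing R] (u : V) :
    ∑ i, G.lapMatrix R i u ^ 2 = (G.degree u : R) ^ 2 + G.degree u := by
  have hcol : ∑ i, G.lapMatrix R i u ^ 2 =
      (G.lapMatrix R).mulVec (fun i ↦ G.lapMatrix R i u) u := by
    simp only [Matrix.mulVec, dotProduct, sq, (G.isSymm_lapMatrix R).apply u]
  rw [hcol, lapMatrix_mulVec_apply, lapMatrix_apply_self,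
    Finset.sum_congr rfl fun w hw ↦ G.lapMatrix_apply_of_adj ((G.mem_neighborFinset u w).1 hw).symm]
  simp [sq]

end SimpleGraph

theorem sum_sq_gram_eq_of_tight {𝕜 E ι : Type*} [RCLike 𝕜] [NormedAddCommGroup E]
    [InnerProductSpace 𝕜 E] [Fintype ι] {f : ι → E} {M : Matrix ι ι ℝ} {α : ℝ}
    (hgram : ∀ i j, inner 𝕜 (f i) (f j) = (M i j : 𝕜))
    (htight : ∀ v, ∑ i, ‖inner 𝕜 (f i) v‖ ^ 2 = α * ‖v‖ ^ 2) (u : ι) :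
    ∑ i, M i u ^ 2 = α * M u u := by
  have hnorm : ‖f u‖ ^ 2 = M u u := by
    exact_mod_cast (inner_self_eq_norm_sq_to_K (𝕜 := 𝕜) (f u)).symm.trans (hgram u u)
  simpa only [hgram, RCLike.norm_ofReal, sq_abs, hnorm] using htight (f u)

theorem SimpleGraph.degree_eq_of_sum_lapMatrix_apply_sq {V : Type*} [Fintype V] [DecidableEq V]
    {G : SimpleGraph V} [DecidableRel G.Adj] {α : ℝ}
    (h : ∀ u, ∑ i, G.lapMatrix ℝ i u ^ 2 = α * G.lapMatrix ℝ u u) ⦃u : V⦄ (hu : 0 < G.degree u) :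
    (G.degree u : ℝ) = α - 1 := by
  have hdeg : (G.degree u : ℝ) * (G.degree u + 1) = (G.degree u : ℝ) * α := by
    rw [mul_comm _ α, ← G.lapMatrix_apply_self, ← h, G.sum_lapMatrix_apply_sq, G.lapMatrix_apply_self]
    ring
  linarith [mul_left_cancel₀ (by positivity) hdeg]

theorem stmt_9_general (n k : ℕ) (G : SimpleGraph (Fin n)) [DecidableRel G.Adj]
    (f : Fin n → EuclideanSpace ℂ (Fin k))
    (hf_gram : ∀ i j : Fin n, ⟪f i, f j⟫ = ((G.lapMatrix ℝ) i j : ℂ))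
    (htight : ∃ α : ℝ, 0 < α ∧
      ∀ v : EuclideanSpace ℂ (Fin k), ∑ i : Fin n, ‖⟪f i, v⟫‖ ^ 2 = α * ‖v‖ ^ 2) :
    ∀ u v : Fin n, G.Reachable u v → G.degree u = G.degree v := by
  obtain ⟨α, -, htight⟩ := htight
  have hdeg := G.degree_eq_of_sum_lapMatrix_apply_sq (sum_sq_gram_eq_of_tight hf_gram htight)
  intro u v huv
  rcases eq_or_ne u v with rfl | hne
  · rfl
  · exact_mod_cast (hdeg (huv.degree_pos_left hne)).trans (hdeg (huv.degree_pos_right hne)).symm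

theorem stmt_9 (n k : ℕ) (G : SimpleGraph (Fin n)) [DecidableRel G.Adj]
    (f : Fin n → EuclideanSpace ℂ (Fin k))
    (hf_span : Submodule.span ℂ (Set.range f) = ⊤)
    (hf_gram : ∀ i j : Fin n, ⟪f i, f j⟫ = ((G.lapMatrix ℝ) i j : ℂ))
    (htight : ∃ α : ℝ, 0 < α ∧
      ∀ v : EuclideanSpace ℂ (Fin k), ∑ i : Fin n, ‖⟪f i, v⟫‖ ^ 2 = α * ‖v‖ ^ 2) :
    ∀ u v : Fin n, G.Reachable u v → G.degree u = G.degree v :=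
  stmt_9_general n k G f hf_gram htight
end

section
/- Let G be a connected simple graph on Fin n with n ≥ 2. Then G has exactly two distinct eigenvalues (the set of real eigenvalues of its adjacency matrix has exactly two elements) if and only if G is the complete graph on Fin n. -/
/-!
A real symmetric matrix `A` whose spectrum lies in `{r, s}` satisfies `(A - r)(A - s) = 0`, by the
continuous functional calculus. For an adjacency matrix the `(u, w)` entry of `A²` counts the
common neighbours of `u` and `w`, so this relation forbids two distinct non-adjacent vertices from
having a common neighbour; in a connected graph that leaves only the complete graph.
Conversely the adjacency matrix of `Kₙ` is `J - 1` with `J` the all-ones matrix, and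
`J² = n • J` gives `(A - (n - 1))(A + 1) = 0`; as `A` is not a scalar matrix, both roots lie in
its spectrum.
-/

open Matrix

section Spectrum

variable {A : Type*} [Ring A]

theorem IsSelfAdjoint.sub_mul_sub_eq_zero_of_spectrum_subset [StarRing A] [Algebra ℝ A]
    [TopologicalSpace A] [ContinuousFunctionalCalculus ℝ A IsSelfAdjoint] {a : A}
    (ha : IsSelfAdjoint a) {r s : ℝ} (h : spectrum ℝ a ⊆ {r, s}) :
    (a - algebraMap ℝ A r) * (a - algebraMap ℝ A s) = 0 := by
  calc (a - algebraMap ℝ A r) * (a - algebraMap ℝ A s)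
      = cfc (fun x => (x - r) * (x - s)) a := by
        rw [cfc_mul _ _ a, cfc_sub _ _ a, cfc_sub _ _ a, cfc_const r a, cfc_const s a,
          cfc_id' ℝ a]
    _ = cfc (fun _ => 0) a := cfc_congr fun x hx => by
        rcases h hx with rfl | rfl <;> simp
    _ = 0 := cfc_const_zero ℝ a

variable {K : Type*} [Field K] [Algebra K A]

theorem spectrum_subset_pair_of_sub_mul_sub_eq_zero [Nontrivial A] {a : A} {r s : K}
    (h : (a - algebraMap K A r) * (a - algebraMap K A s) = 0) : spectrum K a ⊆ {r, s} := by
  intro μ hμ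
  have hroot := spectrum.subset_polynomial_aeval a ((Polynomial.X - .C r) * (.X - .C s))
    ⟨μ, hμ, rfl⟩
  simpa only [map_mul, map_sub, Polynomial.aeval_X, Polynomial.aeval_C, h, spectrum.zero_eq,
    Polynomial.eval_mul, Polynomial.eval_sub, Polynomial.eval_X, Polynomial.eval_C,
    Set.mem_insert_iff, Set.mem_singleton_iff, mul_eq_zero, sub_eq_zero] using hroot

theorem spectrum_eq_pair_of_sub_mul_sub_eq_zero [Nontrivial A] {a : A} {r s : K}
    (h : (a - algebraMap K A r) * (a - algebraMap K A s) = 0) (hr : a ≠ algebraMap K A r)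
    (hs : a ≠ algebraMap K A s) : spectrum K a = {r, s} := by
  refine (spectrum_subset_pair_of_sub_mul_sub_eq_zero h).antisymm ?_
  rintro μ (rfl | rfl) <;> rw [spectrum.mem_iff, ← neg_sub, IsUnit.neg_iff] <;> intro hunit
  · exact hs (sub_eq_zero.mp (hunit.mul_right_eq_zero.mp h))
  · exact hr (sub_eq_zero.mp (hunit.mul_left_eq_zero.mp h))

end Spectrum

namespace SimpleGraph

variable {V : Type*} {G : SimpleGraph V}

theorem Connected.eq_top_of_adj_adj (hG : G.Connected)
    (h : ∀ ⦃u v w⦄, G.Adj u v → G.Adj v w → u ≠ w → G.Adj u w) : G = ⊤ := by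
  have hreach : ∀ u w, Relation.ReflTransGen G.Adj u w → u = w ∨ G.Adj u w := by
    intro u w huw
    induction huw with
    | refl => exact .inl rfl
    | tail _ hvw ih =>
      rcases ih with rfl | huv
      · exact .inr hvw
      · exact (eq_or_ne _ _).imp_right (h huv hvw)
  ext u w
  refine ⟨Adj.ne, fun huw => ?_⟩
  exact (hreach u w ((reachable_iff_reflTransGen u w).mp (hG u w))).resolve_left huw

variable [Fintype V] [DecidableRel G.Adj]

theorem one_le_adjMatrix_mul_self_apply {R : Type*} [Semiring R] [PartialOrder R] [IsOrderedRing R]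
    {u v w : V} (huv : G.Adj u v) (hvw : G.Adj v w) :
    1 ≤ (G.adjMatrix R * G.adjMatrix R) u w := by
  rw [mul_apply]
  calc (1 : R) = G.adjMatrix R u v * G.adjMatrix R v w := by simp [huv, hvw]
    _ ≤ ∑ x, G.adjMatrix R u x * G.adjMatrix R x w :=
      Finset.single_le_sum (f := fun x => G.adjMatrix R u x * G.adjMatrix R x w)
        (fun x _ => by simp only [adjMatrix_apply]; split_ifs <;> simp)
        (Finset.mem_univ v)

variable [DecidableEq V]

theorem Connected.eq_top_of_spectrum_adjMatrix_subset_pair (hG : G.Connected) {r s : ℝ}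
    (h : spectrum ℝ (G.adjMatrix ℝ) ⊆ {r, s}) : G = ⊤ := by
  have hrel := (G.isHermitian_adjMatrix ℝ).isSelfAdjoint.sub_mul_sub_eq_zero_of_spectrum_subset h
  refine hG.eq_top_of_adj_adj fun u v w huv hvw huw => ?_
  by_contra huw'
  have hsq : G.adjMatrix ℝ * G.adjMatrix ℝ = (r + s) • G.adjMatrix ℝ - (r * s) • 1 := by
    rw [← sub_eq_zero, ← hrel]
    simp only [Algebra.algebraMap_eq_smul_one, sub_mul, mul_sub, smul_mul_assoc, mul_smul_comm,
      one_mul, mul_one]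
    module
  have hzero : (G.adjMatrix ℝ * G.adjMatrix ℝ) u w = 0 := by
    rw [hsq]
    simp [huw, huw']
  linarith [one_le_adjMatrix_mul_self_apply (R := ℝ) huv hvw]

theorem spectrum_adjMatrix_top [DecidableRel (⊤ : SimpleGraph V).Adj] (hV : 1 < Fintype.card V) :
    spectrum ℝ ((⊤ : SimpleGraph V).adjMatrix ℝ) = {(Fintype.card V : ℝ) - 1, -1} := by
  have : Nontrivial V := Fintype.one_lt_card_iff_nontrivial.mp hV
  set J : Matrix V V ℝ := .of fun _ _ => 1
  have hA : (⊤ : SimpleGraph V).adjMatrix ℝ = J - 1 := by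
    ext i j
    by_cases h : i = j <;> simp [J, one_apply, h]
  have hJ : J * J = (Fintype.card V : ℝ) • J := by
    ext i j
    simp [J, mul_apply]
  have hscalar (c : ℝ) (hc : c ≠ 0) :
      (⊤ : SimpleGraph V).adjMatrix ℝ ≠ algebraMap ℝ _ c := by
    intro h
    simpa [Algebra.algebraMap_eq_smul_one, eq_comm, hc] using
      congrFun₂ h (Classical.arbitrary V) (Classical.arbitrary V)
  have hcard : (Fintype.card V : ℝ) - 1 ≠ 0 := by
    rw [sub_ne_zero]; exact_mod_cast hV.ne'
  refine spectrum_eq_pair_of_sub_mul_sub_eq_zero ?_ (hscalar _ hcard) (hscalar _ (by norm_num))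
  calc _ = (J - (Fintype.card V : ℝ) • 1) * J := by
        rw [hA, Algebra.algebraMap_eq_smul_one, Algebra.algebraMap_eq_smul_one]
        congr 1 <;> module
    _ = 0 := by rw [sub_mul, hJ, smul_mul_assoc, one_mul, sub_self]

end SimpleGraph

theorem stmt_14 (n : ℕ) (hn : 2 ≤ n)
    (G : SimpleGraph (Fin n)) [DecidableRel G.Adj] (hG : G.Connected) :
    (spectrum ℝ (G.adjMatrix ℝ)).ncard = 2 ↔ G = ⊤ := by
  constructor
  · intro h
    obtain ⟨r, s, -, hrs⟩ := Set.ncard_eq_two.mp h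
    exact hG.eq_top_of_spectrum_adjMatrix_subset_pair hrs.subset
  · rintro rfl
    have hn' : (n : ℝ) - 1 ≠ -1 := by
      rw [Ne, sub_eq_neg_self]; exact_mod_cast (by omega : n ≠ 0)
    rw [SimpleGraph.spectrum_adjMatrix_top (by rw [Fintype.card_fin]; omega), Fintype.card_fin,
      Set.ncard_pair hn']
end

section
/- Let G be a connected simple graph on Fin n with n ≥ 2 and let f : Fin n → EuclideanSpace ℂ (Fin (n−1)) be a G(n,n−1)-frame generated by G. Then f is a tight frame if and only if G is the complete graph on Fin n. -/
/-!
Let `S v = ∑ i, ⟪f i, v⟫ • f i` be the frame operator. The frame is `α`-tight exactly when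
`S = α • id`, and since `f` spans, this happens exactly when the Gramian `L` satisfies
`L² = α L`, because `⟪f u, S (f w)⟫ = (L²) u w`. For the complete graph `L = n • 1 - J`, with
`J` the all-ones matrix and `L J = 0`, so `L² = n L`. Conversely, if `u ≠ w` are not adjacent
then `L u w = 0`, while `(L²) u w` counts the common neighbours of `u` and `w`; so `L² = α L`
forces every path `u - v - w` to close up into an edge, and a connected graph with this
property is complete.
-/

open scoped InnerProductSpace ComplexInnerProductSpace

section Frame

open Matrix

variable (𝕜 : Type*) {E ι : Type*} [RCLike 𝕜] [NormedAddCommGroup E] [InnerProductSpace 𝕜 E]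

noncomputable def frameOperator [Fintype ι] (f : ι → E) : E →ₗ[𝕜] E :=
  ∑ i, (innerₛₗ 𝕜 (f i)).smulRight (f i)

variable {𝕜}

theorem eq_zero_of_forall_inner_eq_zero {f : ι → E} (hf : Submodule.span 𝕜 (Set.range f) = ⊤)
    {y : E} (hy : ∀ i, ⟪f i, y⟫_𝕜 = 0) : y = 0 := by
  have hortho : Submodule.span 𝕜 (Set.range f) ⟂ 𝕜 ∙ y := by
    rw [Submodule.isOrtho_span]
    rintro _ ⟨i, rfl⟩ _ rfl
    exact hy i
  rwa [hf, Submodule.isOrtho_top_left, Submodule.span_singleton_eq_bot] at hortho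

variable [Fintype ι] (f : ι → E)

theorem frameOperator_apply (v : E) : frameOperator 𝕜 f v = ∑ i, ⟪f i, v⟫_𝕜 • f i := by
  simp [frameOperator]

theorem isSymmetric_frameOperator : (frameOperator 𝕜 f).IsSymmetric := by
  intro x y
  simp only [frameOperator_apply, sum_inner, inner_sum, inner_smul_left, inner_smul_right,
    inner_conj_symm]
  exact Finset.sum_congr rfl fun i _ => mul_comm _ _

theorem inner_frameOperator_self (v : E) :
    ⟪frameOperator 𝕜 f v, v⟫_𝕜 = ((∑ i, ‖⟪f i, v⟫_𝕜‖ ^ 2 : ℝ) : 𝕜) := by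
  simp only [frameOperator_apply, sum_inner, inner_smul_left, RCLike.ofReal_sum,
    RCLike.ofReal_pow, RCLike.conj_mul]

theorem frameOperator_eq_smul_id_iff (α : ℝ) :
    frameOperator 𝕜 f = (α : 𝕜) • LinearMap.id ↔
      ∀ v, ∑ i, ‖⟪f i, v⟫_𝕜‖ ^ 2 = α * ‖v‖ ^ 2 := by
  have hsymm : (frameOperator 𝕜 f - (α : 𝕜) • LinearMap.id).IsSymmetric :=
    (isSymmetric_frameOperator f).sub (LinearMap.IsSymmetric.id.smul (RCLike.conj_ofReal α))
  rw [← sub_eq_zero, ← hsymm.inner_map_self_eq_zero]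
  refine forall_congr' fun v => ?_
  rw [LinearMap.sub_apply, inner_sub_left, inner_frameOperator_self, LinearMap.smul_apply,
    LinearMap.id_apply, inner_smul_left, inner_self_eq_norm_sq_to_K, RCLike.conj_ofReal,
    sub_eq_zero]
  norm_cast

theorem inner_frameOperator_apply (u w : ι) :
    ⟪f u, frameOperator 𝕜 f (f w)⟫_𝕜 = (gram 𝕜 f * gram 𝕜 f) u w := by
  simp only [frameOperator_apply, inner_sum, inner_smul_right, mul_apply, gram_apply]
  exact Finset.sum_congr rfl fun i _ => mul_comm _ _

theorem frameOperator_eq_smul_id_iff_gram {f : ι → E} (hf : Submodule.span 𝕜 (Set.range f) = ⊤)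
    (c : 𝕜) : frameOperator 𝕜 f = c • LinearMap.id ↔ gram 𝕜 f * gram 𝕜 f = c • gram 𝕜 f := by
  constructor
  · intro h
    ext u w
    rw [← inner_frameOperator_apply, h]
    simp [inner_smul_right]
  · intro h
    refine LinearMap.ext_on_range hf fun w => sub_eq_zero.1 ?_
    refine eq_zero_of_forall_inner_eq_zero hf fun u => ?_
    rw [inner_sub_right, inner_frameOperator_apply, h]
    simp [inner_smul_right]

end Frame

namespace SimpleGraph

open Matrix

variable {V R : Type*}

theorem Connected.eq_top_of_adj_of_adj {G : SimpleGraph V} (hG : G.Connected)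
    (h : ∀ ⦃u v w⦄, G.Adj u v → G.Adj v w → u ≠ w → G.Adj u w) : G = ⊤ := by
  ext u w
  refine ⟨G.ne_of_adj, fun hne => ?_⟩
  have key : ∀ w, Relation.ReflTransGen G.Adj u w → u = w ∨ G.Adj u w := by
    intro w huw
    induction huw with
    | refl => exact .inl rfl
    | @tail v w _ hvw ih =>
      rcases ih with rfl | huv
      · exact .inr hvw
      · by_cases huw : u = w
        · exact .inl huw
        · exact .inr (h huv hvw huw)
  exact (key w ((reachable_iff_reflTransGen u w).1 (hG u w))).resolve_left hne

variable [Fintype V]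

theorem adjMatrix_mul_self_apply (G : SimpleGraph V) [DecidableRel G.Adj] [Semiring R] (u w : V) :
    (G.adjMatrix R * G.adjMatrix R) u w = Fintype.card (G.commonNeighbors u w) := by
  rw [mul_apply, Fintype.card_subtype]
  simp only [adjMatrix_apply, mul_boole, ← ite_and, Finset.sum_boole, mem_commonNeighbors]
  simp [adj_comm, and_comm]

variable [DecidableEq V]

theorem lapMatrix_top [Ring R] :
    (⊤ : SimpleGraph V).lapMatrix R = (Fintype.card V : R) • 1 - of fun _ _ => 1 := by
  ext i j
  rcases eq_or_ne i j with rfl | hij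
  · have : 1 ≤ Fintype.card V := Fintype.card_pos_iff.2 ⟨i⟩
    simp [lapMatrix, degMatrix, Nat.cast_sub this]
  · simp [lapMatrix, degMatrix, hij]

theorem lapMatrix_top_mul_self [CommRing R] :
    (⊤ : SimpleGraph V).lapMatrix R * (⊤ : SimpleGraph V).lapMatrix R =
      (Fintype.card V : R) • (⊤ : SimpleGraph V).lapMatrix R := by
  have hzero : (⊤ : SimpleGraph V).lapMatrix R * (of fun _ _ => 1) = 0 := by
    ext i j
    simpa [mul_apply, mulVec, dotProduct] using
      congrFun ((⊤ : SimpleGraph V).lapMatrix_mulVec_const_eq_zero (R := R)) i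
  conv_lhs => arg 2; rw [lapMatrix_top]
  rw [Matrix.mul_sub, hzero, sub_zero, Matrix.mul_smul, Matrix.mul_one]

variable (G : SimpleGraph V) [DecidableRel G.Adj]

theorem map_lapMatrix [Ring R] {S : Type*} [Ring S] (φ : R →+* S) :
    (G.lapMatrix R).map φ = G.lapMatrix S := by
  ext i j
  rcases eq_or_ne i j with rfl | hij
  · simp [lapMatrix, degMatrix]
  · by_cases h : G.Adj i j <;> simp [lapMatrix, degMatrix, hij, h]

theorem lapMatrix_apply_of_ne [Ring R] {u w : V} (huw : u ≠ w) :
    G.lapMatrix R u w = -G.adjMatrix R u w := by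
  simp [lapMatrix, degMatrix, huw]

theorem lapMatrix_mul_self_apply_of_not_adj [Ring R] {u w : V} (huw : u ≠ w) (h : ¬G.Adj u w) :
    (G.lapMatrix R * G.lapMatrix R) u w = Fintype.card (G.commonNeighbors u w) := by
  rw [← adjMatrix_mul_self_apply, lapMatrix, degMatrix, sub_mul, mul_sub, mul_sub,
    Matrix.sub_apply, Matrix.sub_apply, Matrix.sub_apply, diagonal_mul, diagonal_mul,
    mul_diagonal, adjMatrix_apply, diagonal_apply_ne _ huw, if_neg h]
  simp only [mul_zero, zero_mul, sub_zero, zero_sub, neg_neg]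

variable {G} in
theorem Connected.eq_top_of_lapMatrix_mul_self_eq_smul [Ring R] [CharZero R] (hG : G.Connected)
    {c : R}
    (h : G.lapMatrix R * G.lapMatrix R = c • G.lapMatrix R) : G = ⊤ := by
  refine hG.eq_top_of_adj_of_adj fun u v w huv hvw huw => ?_
  by_contra hnadj
  have hcard := G.lapMatrix_mul_self_apply_of_not_adj (R := R) huw hnadj
  rw [h, Matrix.smul_apply, lapMatrix_apply_of_ne G huw, adjMatrix_apply, if_neg hnadj, neg_zero,
    smul_zero, eq_comm, Nat.cast_eq_zero, Fintype.card_eq_zero_iff] at hcard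
  exact hcard.false ⟨v, huv, hvw.symm⟩

end SimpleGraph

theorem stmt_15 (n : ℕ) (hn : 2 ≤ n)
    (G : SimpleGraph (Fin n)) [DecidableRel G.Adj] (hG : G.Connected)
    (f : Fin n → EuclideanSpace ℂ (Fin (n - 1)))
    (hf_span : Submodule.span ℂ (Set.range f) = ⊤)
    (hf_gram : ∀ i j : Fin n, ⟪f i, f j⟫ = ((G.lapMatrix ℝ) i j : ℂ)) :
    (∃ α : ℝ, 0 < α ∧
      ∀ v : EuclideanSpace ℂ (Fin (n - 1)),
        ∑ i : Fin n, ‖⟪f i, v⟫‖ ^ 2 = α * ‖v‖ ^ 2) ↔ G = ⊤ := by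
  have hgram : Matrix.gram ℂ f = G.lapMatrix ℂ := by
    ext i j
    rw [Matrix.gram_apply, hf_gram, ← G.map_lapMatrix Complex.ofRealHom]
    rfl
  simp_rw [← frameOperator_eq_smul_id_iff, frameOperator_eq_smul_id_iff_gram hf_span, hgram]
  constructor
  · rintro ⟨α, -, h⟩
    exact hG.eq_top_of_lapMatrix_mul_self_eq_smul h
  · rintro rfl
    obtain rfl : ‹DecidableRel (⊤ : SimpleGraph (Fin n)).Adj› = SimpleGraph.Top.adjDecidable _ :=
      Subsingleton.elim _ _
    refine ⟨n, Nat.cast_pos.2 (by omega), ?_⟩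
    simpa using SimpleGraph.lapMatrix_top_mul_self (V := Fin n) (R := ℂ)
end
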